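/- (Closed form for δ > 0.) Let ε > 0, 0 < δ ≤ 1, and set ρ = δ/(e^ε − 1). Let m be a distribution on V with prefix sums s⁰, and for t ∈ ℕ let s^t denote the prefix sums of T_{ε,δ}^t(m). Fix 1 ≤ k ≤ q and set τ_k = ⌊max{ln((1/(e^ε + 1) + ρ)/(s⁰_k + ρ))/ε + 1, 0}⌋. Then s^t_k = min{1, e^{tε}·(s⁰_k + ρ) − ρ} for all 0 ≤ t ≤ τ_k, and s^t_k = min{1, 1 + e^ε ρ − e^{−ε(t − τ_k)}·(1 − s^{τ_k}_k + e^ε ρ)} for all t ≥ τ_k + 1. -/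
import Mathlib


open Finset

/-- Prefix sum `s_k = p_1 + ⋯ + p_k` (0-indexed internally: sum of entries with index `< k`). -/
noncomputable def prefixSum (q : ℕ) (p : Fin q → ℝ) (k : ℕ) : ℝ :=
  ∑ i ∈ Finset.univ.filter (fun i : Fin q => (i : ℕ) < k), p i

/-- `p` is a probability distribution on `V = {1, …, q}`. -/
def IsDist (q : ℕ) (p : Fin q → ℝ) : Prop :=
  (∀ k, 0 ≤ p k) ∧ ∑ k, p k = 1

/-- The modified prefix sums `s'_k` defining the operator `T_{ε,δ}`:
`s'_0 = 0` and `s'_k = min {1, min {e^ε s_k, 1 - e^{-ε} (1 - s_k)} + δ}` for `k ≥ 1`. -/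
noncomputable def sPrime (ε δ : ℝ) (q : ℕ) (p : Fin q → ℝ) (k : ℕ) : ℝ :=
  if k = 0 then 0
  else min 1 (min (Real.exp ε * prefixSum q p k)
      (1 - Real.exp (-ε) * (1 - prefixSum q p k)) + δ)

/-- The operator `T_{ε,δ}`: `(T_{ε,δ} p)_k = s'_k - s'_{k-1}`. -/
noncomputable def Tmap (ε δ : ℝ) (q : ℕ) (p : Fin q → ℝ) : Fin q → ℝ :=
  fun k => sPrime ε δ q p ((k : ℕ) + 1) - sPrime ε δ q p (k : ℕ)

/-- `P` and `Q` are `(ε,δ)`-close: for every `S ⊆ V`,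
`P(S) ≤ e^ε Q(S) + δ` and `Q(S) ≤ e^ε P(S) + δ`. -/
def Close (ε δ : ℝ) (q : ℕ) (P Q : Fin q → ℝ) : Prop :=
  ∀ S : Finset (Fin q),
    (∑ k ∈ S, P k) ≤ Real.exp ε * (∑ k ∈ S, Q k) + δ ∧
    (∑ k ∈ S, Q k) ≤ Real.exp ε * (∑ k ∈ S, P k) + δ

/-- Dominance ordering: `x ⪯ y` iff every prefix sum of `x` is at most that of `y`. -/
def Dom (q : ℕ) (x y : Fin q → ℝ) : Prop :=
  ∀ k : ℕ, k ≤ q → prefixSum q x k ≤ prefixSum q y k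

/- ----------------- auxiliary lemmas ----------------- -/

lemma prefixSum_zero (q : ℕ) (p : Fin q → ℝ) : prefixSum q p 0 = 0 := by
  simp [prefixSum]

lemma prefixSum_succ (q : ℕ) (p : Fin q → ℝ) (k : ℕ) (hk : k < q) :
    prefixSum q p (k + 1) = prefixSum q p k + p ⟨k, hk⟩ := by
  unfold prefixSum
  have h : Finset.univ.filter (fun i : Fin q => (i : ℕ) < k + 1)
      = insert (⟨k, hk⟩ : Fin q) (Finset.univ.filter (fun i : Fin q => (i : ℕ) < k)) := by
    ext i
    simp only [Finset.mem_filter, Finset.mem_univ, true_and, Finset.mem_insert, Fin.ext_iff]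
    omega
  rw [h, Finset.sum_insert (by simp)]
  ring

lemma prefixSum_Tmap (ε δ : ℝ) (q : ℕ) (p : Fin q → ℝ) :
    ∀ k : ℕ, k ≤ q → prefixSum q (Tmap ε δ q p) k = sPrime ε δ q p k := by
  intro k
  induction k with
  | zero => intro _; simp [prefixSum_zero, sPrime]
  | succ k ih =>
    intro hk
    have hk' : k < q := hk
    rw [prefixSum_succ q _ k hk', ih (le_of_lt hk')]
    show sPrime ε δ q p k + (sPrime ε δ q p (k + 1) - sPrime ε δ q p k) = _
    ring

set_option maxHeartbeats 1600000 in
/-- Pure real-analysis core: closed form for the scalar recurrence. -/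
lemma main_aux (ε δ : ℝ) (hε : 0 < ε) (hδ0 : 0 < δ)
    (ρ : ℝ) (hρ : ρ = δ / (Real.exp ε - 1)) (τ : ℕ) (s : ℕ → ℝ)
    (h0 : 0 ≤ s 0) (h1 : s 0 ≤ 1)
    (hτ : τ = ⌊max (Real.log ((1 / (Real.exp ε + 1) + ρ) / (s 0 + ρ)) / ε + 1) 0⌋₊)
    (hrec : ∀ t : ℕ, s (t + 1) =
      min 1 (min (Real.exp ε * s t) (1 - Real.exp (-ε) * (1 - s t)) + δ)) :
    (∀ t : ℕ, t ≤ τ → s t = min 1 (Real.exp (t * ε) * (s 0 + ρ) - ρ)) ∧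
    (∀ t : ℕ, τ + 1 ≤ t → s t = min 1 (1 + Real.exp ε * ρ -
      Real.exp (-(ε * ((t : ℝ) - (τ : ℝ)))) * (1 - s τ + Real.exp ε * ρ))) := by
  set E := Real.exp ε with hEdef
  clear_value E
  have hE1 : 1 < E := by
    rw [hEdef, show (1:ℝ) = Real.exp 0 from Real.exp_zero.symm]
    exact Real.exp_lt_exp.mpr hε
  have hEpos : (0:ℝ) < E := lt_trans one_pos hE1
  have hEi : E * Real.exp (-ε) = 1 := by rw [hEdef, ← Real.exp_add]; simp
  have hEipos : (0:ℝ) < Real.exp (-ε) := Real.exp_pos _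
  have hEilt : Real.exp (-ε) < 1 := by nlinarith
  have hρpos : 0 < ρ := by rw [hρ]; exact div_pos hδ0 (by linarith)
  have hρδ : ρ * (E - 1) = δ := by
    rw [hρ]; exact div_mul_cancel₀ δ (sub_ne_zero.mpr hE1.ne')
  have hA : 0 < s 0 + ρ := by linarith
  have hstpos : (0:ℝ) < 1 / (E + 1) := div_pos one_pos (by linarith)
  have hst1 : 1 / (E + 1) < 1 := by rw [div_lt_one (by linarith)]; linarith
  have hB : 0 < 1 / (E + 1) + ρ := by linarith
  have hBA : 0 < (1 / (E + 1) + ρ) / (s 0 + ρ) := div_pos hB hA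
  have hexpL : Real.exp (Real.log ((1 / (E + 1) + ρ) / (s 0 + ρ)))
      = (1 / (E + 1) + ρ) / (s 0 + ρ) := Real.exp_log hBA
  -- the difference of the two branches
  have hd : ∀ x : ℝ, E * x - (1 - Real.exp (-ε) * (1 - x))
      = Real.exp (-ε) * (E ^ 2 * x - x - (E - 1)) := by
    intro x
    linear_combination (1 - E * x) * hEi
  have hq3 : ∀ x : ℝ, x ≤ 1 / (E + 1) → E ^ 2 * x - x - (E - 1) ≤ 0 := by
    intro x hx
    have hx' : x * (E + 1) ≤ 1 := (le_div_iff₀ (by linarith)).mp hx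
    nlinarith [mul_le_mul_of_nonneg_right hx' (by linarith : (0:ℝ) ≤ E - 1)]
  have hq3' : ∀ x : ℝ, 1 / (E + 1) ≤ x → 0 ≤ E ^ 2 * x - x - (E - 1) := by
    intro x hx
    have hx' : 1 ≤ x * (E + 1) := (div_le_iff₀ (by linarith)).mp hx
    nlinarith [mul_le_mul_of_nonneg_right hx' (by linarith : (0:ℝ) ≤ E - 1)]
  have hbr1 : ∀ x : ℝ, x ≤ 1 / (E + 1) →
      min (E * x) (1 - Real.exp (-ε) * (1 - x)) = E * x := by
    intro x hx
    apply min_eq_left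
    nlinarith [hd x, hq3 x hx, mul_nonpos_of_nonneg_of_nonpos hEipos.le (hq3 x hx)]
  have hbr2 : ∀ x : ℝ, 1 / (E + 1) ≤ x →
      min (E * x) (1 - Real.exp (-ε) * (1 - x)) = 1 - Real.exp (-ε) * (1 - x) := by
    intro x hx
    apply min_eq_right
    nlinarith [hd x, hq3' x hx, mul_nonneg hEipos.le (hq3' x hx)]
  have hid1 : ∀ x : ℝ, E * x + δ = E * (x + ρ) - ρ := by
    intro x; linear_combination -hρδ
  have hid2 : ∀ x : ℝ, 1 - Real.exp (-ε) * (1 - x) + δ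
      = 1 + E * ρ - Real.exp (-ε) * (1 - x + E * ρ) := by
    intro x; linear_combination ρ * hEi - hρδ
  have hexp_succ : ∀ t : ℕ, Real.exp ((↑(t + 1) : ℝ) * ε) = E * Real.exp ((t : ℝ) * ε) := by
    intro t
    rw [hEdef, ← Real.exp_add]
    congr 1
    push_cast
    ring
  -- Phase 1
  have hP1 : ∀ t : ℕ, t ≤ τ → s t = min 1 (Real.exp ((t : ℝ) * ε) * (s 0 + ρ) - ρ) := by
    intro t
    induction t with
    | zero =>
      intro _
      have hv : Real.exp ((0 : ℕ) * ε) * (s 0 + ρ) - ρ = s 0 := by norm_num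
      rw [hv, min_eq_right h1]
    | succ t ih =>
      intro ht
      have hst := ih (by omega)
      have htr : (t : ℝ) * ε ≤ Real.log ((1 / (E + 1) + ρ) / (s 0 + ρ)) := by
        have hmax : ((t + 1 : ℕ) : ℝ)
            ≤ max (Real.log ((1 / (E + 1) + ρ) / (s 0 + ρ)) / ε + 1) 0 := by
          rw [hτ] at ht
          exact (Nat.le_floor_iff (le_max_right _ _)).mp ht
        have ht1 : ((t + 1 : ℕ) : ℝ) ≤ Real.log ((1 / (E + 1) + ρ) / (s 0 + ρ)) / ε + 1 := by
          rcases max_cases (Real.log ((1 / (E + 1) + ρ) / (s 0 + ρ)) / ε + 1) (0:ℝ) with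
            ⟨heq, _⟩ | ⟨heq, _⟩
          · rwa [heq] at hmax
          · rw [heq] at hmax
            exfalso
            push_cast at hmax
            linarith
        have ht2 : (t : ℝ) ≤ Real.log ((1 / (E + 1) + ρ) / (s 0 + ρ)) / ε := by
          push_cast at ht1
          linarith
        exact (le_div_iff₀ hε).mp ht2
      have hup : Real.exp ((t : ℝ) * ε) * (s 0 + ρ) ≤ 1 / (E + 1) + ρ := by
        have h := Real.exp_le_exp.mpr htr
        rw [hexpL] at h
        have h2 := mul_le_mul_of_nonneg_right h hA.le
        rwa [div_mul_cancel₀ _ (ne_of_gt hA)] at h2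
      have hsle : s t ≤ 1 / (E + 1) := by
        have := min_le_right 1 (Real.exp ((t : ℝ) * ε) * (s 0 + ρ) - ρ)
        rw [← hst] at this
        linarith
      have hstv : s t = Real.exp ((t : ℝ) * ε) * (s 0 + ρ) - ρ := by
        rw [hst, min_eq_right]
        linarith
      rw [hrec t, hbr1 (s t) hsle, hid1 (s t), hstv]
      congr 1
      rw [hexp_succ t]
      ring
  -- transition facts
  have hsτ := hP1 τ le_rfl
  have hτlow : 1 / (E + 1) < Real.exp ((τ : ℝ) * ε) * (s 0 + ρ) - ρ := by
    have h1' : Real.log ((1 / (E + 1) + ρ) / (s 0 + ρ)) / ε + 1 < (τ : ℝ) + 1 := by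
      calc Real.log ((1 / (E + 1) + ρ) / (s 0 + ρ)) / ε + 1
          ≤ max (Real.log ((1 / (E + 1) + ρ) / (s 0 + ρ)) / ε + 1) 0 := le_max_left _ _
        _ < (τ : ℝ) + 1 := by
            rw [hτ]
            push_cast
            exact Nat.lt_floor_add_one _
    have h2' : Real.log ((1 / (E + 1) + ρ) / (s 0 + ρ)) < (τ : ℝ) * ε :=
      (div_lt_iff₀ hε).mp (by linarith)
    have h3' := Real.exp_lt_exp.mpr h2'
    rw [hexpL] at h3'
    have h4' := mul_lt_mul_of_pos_right h3' hA
    rw [div_mul_cancel₀ _ (ne_of_gt hA)] at h4'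
    linarith
  have hsτge : 1 / (E + 1) ≤ s τ := by
    rw [hsτ]
    exact le_min hst1.le hτlow.le
  have hsτ1 : s τ ≤ 1 := by
    rw [hsτ]; exact min_le_left _ _
  have hC : 0 ≤ 1 - s τ + E * ρ := by nlinarith
  -- Phase 2
  have hQ : ∀ n : ℕ, s (τ + n)
      = min 1 (1 + E * ρ - Real.exp (-(ε * (n : ℝ))) * (1 - s τ + E * ρ)) := by
    intro n
    induction n with
    | zero =>
      simp only [Nat.add_zero, Nat.cast_zero, mul_zero, neg_zero, Real.exp_zero, one_mul]
      rw [show 1 + E * ρ - (1 - s τ + E * ρ) = s τ by ring, min_eq_right hsτ1]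
    | succ n ih =>
      have heone : Real.exp (-(ε * (n : ℝ))) ≤ 1 := by
        rw [show (1:ℝ) = Real.exp 0 by simp]
        apply Real.exp_le_exp.mpr
        have : (0:ℝ) ≤ ε * n := by positivity
        linarith
      have hprod : Real.exp (-(ε * (n : ℝ))) * (1 - s τ + E * ρ) ≤ 1 - s τ + E * ρ :=
        mul_le_of_le_one_left hC heone
      have hrange : 1 / (E + 1) ≤ s (τ + n) := by
        rw [ih]
        apply le_min hst1.le
        linarith
      have hsplit : Real.exp (-(ε * ((n + 1 : ℕ) : ℝ)))
          = Real.exp (-(ε * (n : ℝ))) * Real.exp (-ε) := by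
        rw [← Real.exp_add]
        congr 1
        push_cast
        ring
      have hstep : s (τ + (n + 1)) = min 1 (1 + E * ρ -
          Real.exp (-ε) * (1 - s (τ + n) + E * ρ)) := by
        rw [show τ + (n + 1) = (τ + n) + 1 from rfl, hrec (τ + n),
          hbr2 (s (τ + n)) hrange, hid2 (s (τ + n))]
      rw [hstep, ih]
      rcases le_or_gt (Real.exp (-(ε * (n : ℝ))) * (1 - s τ + E * ρ)) (E * ρ) with hcase | hcase
      · have hXge : (1:ℝ) ≤ 1 + E * ρ - Real.exp (-(ε * (n : ℝ))) * (1 - s τ + E * ρ) := by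
          linarith
        rw [min_eq_left hXge]
        have hinner : Real.exp (-ε) * ((1:ℝ) - 1 + E * ρ) = ρ := by
          linear_combination ρ * hEi
        have hL : min 1 (1 + E * ρ - Real.exp (-ε) * ((1:ℝ) - 1 + E * ρ)) = 1 := by
          rw [hinner]
          apply min_eq_left
          nlinarith [hρδ, hδ0]
        rw [hL]
        symm
        apply min_eq_left
        have hle : Real.exp (-(ε * ((n + 1 : ℕ) : ℝ))) * (1 - s τ + E * ρ)
            ≤ Real.exp (-(ε * (n : ℝ))) * (1 - s τ + E * ρ) := by
          rw [hsplit]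
          nlinarith [mul_nonneg hEipos.le hC, Real.exp_pos (-(ε * (n : ℝ))),
            mul_nonneg (Real.exp_pos (-(ε * (n : ℝ)))).le hC]
        linarith
      · have hXlt : 1 + E * ρ - Real.exp (-(ε * (n : ℝ))) * (1 - s τ + E * ρ) < 1 := by
          linarith
        rw [min_eq_right hXlt.le]
        congr 1
        rw [hsplit]
        ring
  refine ⟨fun t ht => by exact_mod_cast hP1 t ht, ?_⟩
  intro t ht
  obtain ⟨n, rfl⟩ : ∃ n : ℕ, t = τ + n := ⟨t - τ, by omega⟩
  have hcast : ((τ + n : ℕ) : ℝ) - (τ : ℝ) = (n : ℝ) := by push_cast; ring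
  rw [show (ε * (((τ + n : ℕ) : ℝ) - (τ : ℝ))) = ε * (n : ℝ) by rw [hcast]]
  exact hQ n

/-- closed form for δ > 0: with `ρ = δ/(e^ε − 1)`, `s^t` the prefix sums of
`T_{ε,δ}^t(m)`, and `τ_k = ⌊max {ln((1/(e^ε + 1) + ρ)/(s⁰_k + ρ))/ε + 1, 0}⌋`:
`s^t_k = min {1, e^{tε} (s⁰_k + ρ) − ρ}` for `t ≤ τ_k`, and
`s^t_k = min {1, 1 + e^ε ρ − e^{−ε(t − τ_k)} (1 − s^{τ_k}_k + e^ε ρ)}` for `t ≥ τ_k + 1`. -/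
theorem closed_form_delta_pos (q : ℕ) (hq : 1 ≤ q) (ε δ : ℝ) (hε : 0 < ε)
    (hδ0 : 0 < δ) (hδ1 : δ ≤ 1)
    (m : Fin q → ℝ) (hm : IsDist q m) (k : ℕ) (hk1 : 1 ≤ k) (hkq : k ≤ q)
    (ρ : ℝ) (hρ : ρ = δ / (Real.exp ε - 1))
    (τ : ℕ)
    (hτ : τ = ⌊max (Real.log ((1 / (Real.exp ε + 1) + ρ) / (prefixSum q m k + ρ)) / ε + 1)
      0⌋₊) :
    (∀ t : ℕ, t ≤ τ →
      prefixSum q ((Tmap ε δ q)^[t] m) k =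
        min 1 (Real.exp (t * ε) * (prefixSum q m k + ρ) - ρ)) ∧
    (∀ t : ℕ, τ + 1 ≤ t →
      prefixSum q ((Tmap ε δ q)^[t] m) k =
        min 1 (1 + Real.exp ε * ρ - Real.exp (-(ε * ((t : ℝ) - (τ : ℝ)))) *
          (1 - prefixSum q ((Tmap ε δ q)^[τ] m) k + Real.exp ε * ρ))) := by
  have h0 : 0 ≤ prefixSum q m k := Finset.sum_nonneg (fun i _ => hm.1 i)
  have h1 : prefixSum q m k ≤ 1 := by
    rw [← hm.2]
    exact Finset.sum_le_sum_of_subset_of_nonneg (Finset.filter_subset _ _)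
      (fun i _ _ => hm.1 i)
  have hrec : ∀ t : ℕ, prefixSum q ((Tmap ε δ q)^[t + 1] m) k =
      min 1 (min (Real.exp ε * prefixSum q ((Tmap ε δ q)^[t] m) k)
        (1 - Real.exp (-ε) * (1 - prefixSum q ((Tmap ε δ q)^[t] m) k)) + δ) := by
    intro t
    rw [Function.iterate_succ_apply', prefixSum_Tmap ε δ q _ k hkq]
    rw [sPrime, if_neg (by omega : ¬ k = 0)]
  exact main_aux ε δ hε hδ0 ρ hρ τ (fun t => prefixSum q ((Tmap ε δ q)^[t] m) k)
    h0 h1 hτ hrec
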